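/- arXiv:2412.14397 — 5 statements merged into one kernel-verified Lean document; each statement's English description precedes it below -/
import Mathlib

section
/- For H ∈ (0,1) with H ≠ 1/2 and s, t ∈ ℝ, the operator M_-^H applied to the indicator function 1_{(s,t)} equals x ↦ (K_H / Γ(H + 1/2)) · ((t - x)_+^{H - 1/2} − (s - x)_+^{H - 1/2}), where K_H := Γ(H + 1/2) · (∫_0^∞ ((1+s)^{H−1/2} − s^{H−1/2}) ds + 1/(2H))^{−1/2}. -/
open MeasureTheory Set Filter

/-- Normalizing constant `K_H`. -/
noncomputable def KH (H : ℝ) : ℝ :=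
  Real.Gamma (H + 1/2) *
    ((∫ s in Set.Ioi (0:ℝ), ((1 + s) ^ (H - 1/2) - s ^ (H - 1/2))) + 1 / (2 * H)) ^ (-(1/2) : ℝ)

/-- Signed indicator of the interval `(s,t)`. -/
noncomputable def sInd (s t x : ℝ) : ℝ :=
  if s ≤ x ∧ x < t then 1 else if t ≤ x ∧ x < s then -1 else 0

/-- Fractional integral of Weyl's type `M_-^H` (for `H > 1/2`). -/
noncomputable def weylM (H : ℝ) (f : ℝ → ℝ) (x : ℝ) : ℝ :=
  KH H / Real.Gamma (H - 1/2) * ∫ t in Set.Ioi x, f t * (t - x) ^ (H - 3/2)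

/-- Truncated Marchaud difference quotient `D^H_{-,ε}` (for `H < 1/2`). -/
noncomputable def marchaudD (H : ℝ) (ε : ℝ) (f : ℝ → ℝ) (x : ℝ) : ℝ :=
  KH H * (1/2 - H) / Real.Gamma (1/2 + H) *
    ∫ t in Set.Ioi ε, (f x - f (x + t)) * t ^ (H - 3/2)

private lemma const_calc (K G c : ℝ) (hc : c ≠ 0) (X : ℝ) :
    K * c / G * (X / c) = K / G * X := by
  rw [show K * c / G * (X / c) = K / G * X * (c / c) by ring, div_self hc, mul_one]

private lemma sInd_swap (s t u : ℝ) : sInd t s u = - sInd s t u := by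
  unfold sInd
  by_cases h1 : s ≤ u ∧ u < t <;> by_cases h2 : t ≤ u ∧ u < s <;> simp [h1, h2]
  linarith [h1.2, h2.1]

private lemma weyl_key (H : ℝ) (hH2 : 1/2 < H) (s t x : ℝ) (hst : s ≤ t) :
    weylM H (sInd s t) x =
      KH H / Real.Gamma (H + 1/2) *
        ((max (t - x) 0) ^ (H - 1/2) - (max (s - x) 0) ^ (H - 1/2)) := by
  have h12 : H - 1/2 ≠ 0 := ne_of_gt (by linarith)
  have hab : max s x ≤ max t x := max_le_max hst le_rfl
  have hsub : Set.Ioc (max s x) (max t x) ⊆ Set.Ioi x :=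
    fun u hu => lt_of_le_of_lt (le_max_right s x) hu.1
  have hnull : volume ({s, t} : Set ℝ) = 0 := (Set.toFinite _).measure_zero _
  have hae : ∀ᵐ u : ℝ, u ∉ ({s, t} : Set ℝ) := measure_eq_zero_iff_ae_notMem.mp hnull
  have key : (∫ u in Set.Ioi x, sInd s t u * (u - x) ^ (H - 3/2)) =
      ∫ u in Set.Ioi x, (Set.Ioc (max s x) (max t x)).indicator
        (fun u => (u - x) ^ (H - 3/2)) u := by
    refine integral_congr_ae ?_
    filter_upwards [ae_restrict_mem measurableSet_Ioi, ae_restrict_of_ae hae] with u hu hu'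
    simp only [Set.mem_insert_iff, Set.mem_singleton_iff, not_or] at hu'
    obtain ⟨hus, hut⟩ := hu'
    simp only [Set.mem_Ioi] at hu
    rw [Set.indicator_apply]
    simp only [Set.mem_Ioc]
    have hB : ¬ (t ≤ u ∧ u < s) := by rintro ⟨h3, h4⟩; linarith
    have hA : (s ≤ u ∧ u < t) ↔ (max s x < u ∧ u ≤ max t x) := by
      constructor
      · rintro ⟨h3, h4⟩
        exact ⟨max_lt (lt_of_le_of_ne h3 (Ne.symm hus)) hu, le_max_of_le_left h4.le⟩
      · rintro ⟨h3, h4⟩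
        have hsu : s ≤ u := le_of_lt (lt_of_le_of_lt (le_max_left s x) h3)
        have hut' : u < t := by
          rcases le_total t x with h | h
          · rw [max_eq_right h] at h4
            exact absurd hu (not_lt.mpr h4)
          · rw [max_eq_left h] at h4
            exact lt_of_le_of_ne h4 hut
        exact ⟨hsu, hut'⟩
    unfold sInd
    by_cases hc : s ≤ u ∧ u < t
    · rw [if_pos hc, if_pos (hA.mp hc), one_mul]
    · rw [if_neg hc, if_neg hB, if_neg (fun h => hc (hA.mpr h)), zero_mul]
  unfold weylM
  rw [key, setIntegral_indicator measurableSet_Ioc,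
      Set.inter_eq_self_of_subset_right hsub,
      ← intervalIntegral.integral_of_le hab,
      intervalIntegral.integral_comp_sub_right (fun u => u ^ (H - 3/2)) x,
      integral_rpow (Or.inl (by linarith : (-1:ℝ) < H - 3/2)),
      ← max_sub_sub_right t x x, ← max_sub_sub_right s x x, sub_self,
      show H - 3/2 + 1 = H - 1/2 by ring,
      show H + 1/2 = H - 1/2 + 1 by ring, Real.Gamma_add_one h12]
  have hg : Real.Gamma (H - 1/2) ≠ 0 := (Real.Gamma_pos_of_pos (by linarith)).ne'
  field_simp

private lemma marchaud_key (H : ℝ) (hH0 : 0 < H) (hH1 : H < 1/2) (s t x : ℝ) (hst : s ≤ t) :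
    Tendsto (fun ε : ℝ => marchaudD H ε (sInd s t) x) (nhdsWithin 0 (Set.Ioi 0))
      (nhds (KH H / Real.Gamma (H + 1/2) *
        ((max (t - x) 0) ^ (H - 1/2) - (max (s - x) 0) ^ (H - 1/2)))) := by
  have h12 : H - 1/2 ≠ 0 := ne_of_lt (by linarith)
  have hg : Real.Gamma (1/2 + H) ≠ 0 := (Real.Gamma_pos_of_pos (by linarith)).ne'
  have hgc : Real.Gamma (H + 1/2) = Real.Gamma (1/2 + H) := by rw [add_comm]
  have hr : H - 3/2 < -1 := by linarith
  rcases le_or_gt t x with hb | hb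
  · -- t ≤ x : everything is zero
    have hmt : max (t - x) 0 = 0 := max_eq_right (by linarith)
    have hms : max (s - x) 0 = 0 := max_eq_right (by linarith)
    rw [hmt, hms, sub_self, mul_zero]
    refine Tendsto.congr' ?_ tendsto_const_nhds
    filter_upwards [self_mem_nhdsWithin] with ε hε
    simp only [Set.mem_Ioi] at hε
    unfold marchaudD
    have e1 : sInd s t x = 0 := by
      unfold sInd
      rw [if_neg (by rintro ⟨h3, h4⟩; linarith), if_neg (by rintro ⟨h3, h4⟩; linarith)]
    have key : (∫ u in Set.Ioi ε, (sInd s t x - sInd s t (x + u)) * u ^ (H - 3/2)) = 0 := by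
      rw [setIntegral_congr_fun measurableSet_Ioi (g := fun _ => (0:ℝ)), integral_zero]
      intro u hu
      simp only [Set.mem_Ioi] at hu
      have e2 : sInd s t (x + u) = 0 := by
        unfold sInd
        rw [if_neg (by rintro ⟨h3, h4⟩; linarith), if_neg (by rintro ⟨h3, h4⟩; linarith)]
      simp [e1, e2]
    rw [key, mul_zero]
  rcases le_or_gt s x with ha | ha
  · -- s ≤ x < t
    have hb' : 0 < t - x := by linarith
    have hmt : max (t - x) 0 = t - x := max_eq_left hb'.le
    have hms : max (s - x) 0 = 0 := max_eq_right (by linarith)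
    rw [hmt, hms, Real.zero_rpow h12, sub_zero]
    refine Tendsto.congr' ?_ tendsto_const_nhds
    filter_upwards [Ioo_mem_nhdsGT hb'] with ε hε
    obtain ⟨hε0, hεb⟩ := hε
    unfold marchaudD
    have key : (∫ u in Set.Ioi ε, (sInd s t x - sInd s t (x + u)) * u ^ (H - 3/2)) =
        ∫ u in Set.Ioi ε, (Set.Ioi (t - x)).indicator (fun u => u ^ (H - 3/2)) u := by
      refine integral_congr_ae ?_
      have hnull : volume ({t - x} : Set ℝ) = 0 := measure_singleton _
      filter_upwards [ae_restrict_mem measurableSet_Ioi,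
        ae_restrict_of_ae (measure_eq_zero_iff_ae_notMem.mp hnull)] with u hu hu'
      simp only [Set.mem_Ioi] at hu
      simp only [Set.mem_singleton_iff] at hu'
      have hu0 : 0 < u := hε0.trans hu
      have e1 : sInd s t x = 1 := by unfold sInd; rw [if_pos ⟨ha, by linarith⟩]
      rw [Set.indicator_apply, e1]
      simp only [Set.mem_Ioi]
      by_cases hc : u < t - x
      · have e2 : sInd s t (x + u) = 1 := by
          unfold sInd; rw [if_pos ⟨by linarith, by linarith⟩]
        rw [if_neg (by intro h; linarith), e2]
        ring
      · have hcu : t - x < u := lt_of_le_of_ne (not_lt.mp hc) (Ne.symm hu')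
        have e2 : sInd s t (x + u) = 0 := by
          unfold sInd
          rw [if_neg (by rintro ⟨h3, h4⟩; linarith), if_neg (by rintro ⟨h3, h4⟩; linarith)]
        rw [if_pos hcu, e2]
        ring
    rw [key, setIntegral_indicator measurableSet_Ioi, Set.Ioi_inter_Ioi,
        max_eq_right hεb.le, integral_Ioi_rpow_of_lt hr hb',
        show H - 3/2 + 1 = H - 1/2 by ring, hgc,
        show -(t - x) ^ (H - 1/2) / (H - 1/2) = (t - x) ^ (H - 1/2) / (1/2 - H) by
          rw [show (1/2 - H : ℝ) = -(H - 1/2) by ring, div_neg, neg_div]]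
    exact (const_calc (KH H) (Real.Gamma (1/2 + H)) (1/2 - H) (ne_of_gt (by linarith)) _).symm
  · -- x < s ≤ t
    have ha' : 0 < s - x := by linarith
    have hab : s - x ≤ t - x := by linarith
    have hmt : max (t - x) 0 = t - x := max_eq_left (by linarith)
    have hms : max (s - x) 0 = s - x := max_eq_left ha'.le
    rw [hmt, hms]
    refine Tendsto.congr' ?_ tendsto_const_nhds
    filter_upwards [Ioo_mem_nhdsGT ha'] with ε hε
    obtain ⟨hε0, hεa⟩ := hε
    unfold marchaudD
    have hsub : Set.Ioc (s - x) (t - x) ⊆ Set.Ioi ε :=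
      fun u hu => lt_trans hεa hu.1
    have key : (∫ u in Set.Ioi ε, (sInd s t x - sInd s t (x + u)) * u ^ (H - 3/2)) =
        ∫ u in Set.Ioi ε, -((Set.Ioc (s - x) (t - x)).indicator (fun u => u ^ (H - 3/2)) u) := by
      refine integral_congr_ae ?_
      have hnull : volume ({s - x, t - x} : Set ℝ) = 0 := (Set.toFinite _).measure_zero _
      filter_upwards [ae_restrict_mem measurableSet_Ioi,
        ae_restrict_of_ae (measure_eq_zero_iff_ae_notMem.mp hnull)] with u hu hu'
      simp only [Set.mem_insert_iff, Set.mem_singleton_iff, not_or] at hu'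
      obtain ⟨hu1, hu2⟩ := hu'
      simp only [Set.mem_Ioi] at hu
      have hu0 : 0 < u := hε0.trans hu
      have e1 : sInd s t x = 0 := by
        unfold sInd
        rw [if_neg (by rintro ⟨h3, h4⟩; linarith), if_neg (by rintro ⟨h3, h4⟩; linarith)]
      rw [Set.indicator_apply, e1]
      simp only [Set.mem_Ioc]
      by_cases hc : s ≤ x + u ∧ x + u < t
      · have e2 : sInd s t (x + u) = 1 := by unfold sInd; rw [if_pos hc]
        have hc1 : s - x < u := lt_of_le_of_ne (by linarith [hc.1]) (fun h => hu1 h.symm)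
        rw [e2, if_pos ⟨hc1, by linarith [hc.2]⟩]
        ring
      · have e2 : sInd s t (x + u) = 0 := by
          unfold sInd
          rw [if_neg hc, if_neg (by rintro ⟨h3, h4⟩; linarith)]
        have hcn : ¬ (s - x < u ∧ u ≤ t - x) := by
          rintro ⟨h3, h4⟩
          have h5 : u < t - x := lt_of_le_of_ne h4 hu2
          exact hc ⟨by linarith, by linarith⟩
        rw [e2, if_neg hcn]
        ring
    rw [key, integral_neg, setIntegral_indicator measurableSet_Ioc,
        Set.inter_eq_self_of_subset_right hsub,
        ← intervalIntegral.integral_of_le hab,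
        integral_rpow (Or.inr ⟨ne_of_lt hr, Set.notMem_uIcc_of_lt ha' (by linarith)⟩),
        show H - 3/2 + 1 = H - 1/2 by ring, hgc,
        show -(((t - x) ^ (H - 1/2) - (s - x) ^ (H - 1/2)) / (H - 1/2)) =
            ((t - x) ^ (H - 1/2) - (s - x) ^ (H - 1/2)) / (1/2 - H) by
          rw [show (1/2 - H : ℝ) = -(H - 1/2) by ring, div_neg]]
    exact (const_calc (KH H) (Real.Gamma (1/2 + H)) (1/2 - H) (ne_of_gt (by linarith)) _).symm

theorem statement0 (H : ℝ) (hH : H ∈ Set.Ioo (0:ℝ) 1) (hH' : H ≠ 1/2) (s t : ℝ) :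
    ∀ x : ℝ,
      (1/2 < H →
        weylM H (sInd s t) x =
          KH H / Real.Gamma (H + 1/2) *
            ((max (t - x) 0) ^ (H - 1/2) - (max (s - x) 0) ^ (H - 1/2))) ∧
      (H < 1/2 →
        Tendsto (fun ε : ℝ => marchaudD H ε (sInd s t) x) (nhdsWithin 0 (Set.Ioi 0))
          (nhds (KH H / Real.Gamma (H + 1/2) *
            ((max (t - x) 0) ^ (H - 1/2) - (max (s - x) 0) ^ (H - 1/2))))) := by
  obtain ⟨hH0, hH1⟩ := hH
  intro x
  constructor
  · intro hH2
    rcases le_total s t with hst | hts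
    · exact weyl_key H hH2 s t x hst
    · have h1 := weyl_key H hH2 t s x hts
      have hneg : weylM H (sInd s t) x = - weylM H (sInd t s) x := by
        unfold weylM
        rw [show (∫ u in Set.Ioi x, sInd t s u * (u - x) ^ (H - 3/2)) =
            ∫ u in Set.Ioi x, -(sInd s t u * (u - x) ^ (H - 3/2)) from
          integral_congr_ae (ae_of_all _ fun u => by
            show sInd t s u * (u - x) ^ (H - 3/2) = -(sInd s t u * (u - x) ^ (H - 3/2))
            rw [sInd_swap]; ring),
          integral_neg]
        ring
      rw [hneg, h1]
      ring
  · intro hH2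
    rcases le_total s t with hst | hts
    · exact marchaud_key H hH0 hH2 s t x hst
    · have h1 := (marchaud_key H hH0 hH2 t s x hts).neg
      have hneg : ∀ ε : ℝ, marchaudD H ε (sInd s t) x = - marchaudD H ε (sInd t s) x := by
        intro ε
        unfold marchaudD
        rw [show (∫ u in Set.Ioi ε, (sInd t s x - sInd t s (x + u)) * u ^ (H - 3/2)) =
            ∫ u in Set.Ioi ε, -((sInd s t x - sInd s t (x + u)) * u ^ (H - 3/2)) from
          integral_congr_ae (ae_of_all _ fun u => by
            show (sInd t s x - sInd t s (x + u)) * u ^ (H - 3/2) =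
              -((sInd s t x - sInd s t (x + u)) * u ^ (H - 3/2))
            rw [sInd_swap s t x, sInd_swap s t (x + u)]; ring),
          integral_neg]
        ring
      have h2 := h1.congr (fun ε => (hneg ε).symm)
      have h3 : -(KH H / Real.Gamma (H + 1/2) *
          ((max (s - x) 0) ^ (H - 1/2) - (max (t - x) 0) ^ (H - 1/2))) =
          KH H / Real.Gamma (H + 1/2) *
          ((max (t - x) 0) ^ (H - 1/2) - (max (s - x) 0) ^ (H - 1/2)) := by ring
      rwa [h3] at h2
end

section
/- Let μ be a probability measure on (0,∞) whose Laplace transform L[μ] extends to a holomorphic function on the open ball B_R(0) ⊆ ℂ for some R > 0. Then ∫_0^∞ e^{−zx} dμ(x) is finite for all z ∈ ℂ with Re z ∈ (−R, 0), and this integral equals the holomorphic extension of L[μ] on B_R(0). -/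
/-!
On the half-plane `0 < re z` the Laplace transform `L` of `μ` is holomorphic with
`L⁽ⁿ⁾(t) = (-1)ⁿ ∫ xⁿ e^{-tx} dμ`, so it agrees with `F` there by the identity theorem.
Expanding `F` in its Taylor series around a small `t > 0` and evaluating at `-s` (with
`0 ≤ s < R`, which is still inside the disc of convergence) gives the convergent series
`∑ (s + t)ⁿ / n! ∫ xⁿ e^{-tx} dμ` of nonnegative terms, which by monotone convergence is
`∫ e^{sx} dμ`. Thus `μ` has exponential moments of every order `< R`, the Laplace integral
converges and is holomorphic on `-R < re z`, and the identity theorem on `B_R(0)` identifies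
it with `F`.
-/

open MeasureTheory Complex Filter Topology Set Metric
open scoped Nat

noncomputable def laplace (μ : Measure ℝ) (z : ℂ) : ℂ := ∫ x, cexp (-(z * x)) ∂μ

lemma pow_mul_exp_neg_le {c x : ℝ} (hc : 0 < c) (hx : 0 ≤ x) (n : ℕ) :
    x ^ n * Real.exp (-(c * x)) ≤ n ! / c ^ n := by
  have h := Real.pow_div_factorial_le_exp _ (mul_nonneg hc.le hx) n
  rw [Real.exp_neg, ← div_eq_mul_inv, div_le_div_iff₀ (by positivity) (by positivity)]
  rw [div_le_iff₀ (by positivity), mul_pow] at h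
  linarith

lemma norm_pow_mul_cexp_neg (n : ℕ) (z : ℂ) {x : ℝ} (hx : 0 ≤ x) :
    ‖(x : ℂ) ^ n * cexp (-(z * x))‖ = x ^ n * Real.exp (-(z.re * x)) := by
  simp [Complex.norm_exp, Complex.mul_re, abs_of_nonneg hx]

lemma norm_pow_mul_cexp_neg_le {δ b x : ℝ} {z : ℂ} (hδ : 0 < δ) (hb : δ - z.re ≤ b) (hx : 0 ≤ x)
    (n : ℕ) : ‖(x : ℂ) ^ n * cexp (-(z * x))‖ ≤ n ! / δ ^ n * Real.exp (b * x) := by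
  calc ‖(x : ℂ) ^ n * cexp (-(z * x))‖
      = x ^ n * Real.exp (-(δ * x)) * Real.exp ((δ - z.re) * x) := by
        rw [norm_pow_mul_cexp_neg n z hx, mul_assoc, ← Real.exp_add]; ring_nf
    _ ≤ n ! / δ ^ n * Real.exp (b * x) := by
        gcongr
        exact pow_mul_exp_neg_le hδ hx n

lemma integrable_exp_mul_of_le {μ : Measure ℝ} (hμ : ∀ᵐ x ∂μ, 0 ≤ x) {s s' : ℝ} (hss' : s ≤ s')
    (h : Integrable (fun x => Real.exp (s' * x)) μ) : Integrable (fun x => Real.exp (s * x)) μ := by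
  refine h.mono' (by fun_prop) ?_
  filter_upwards [hμ] with x hx
  rw [Real.norm_of_nonneg (Real.exp_pos _).le]
  gcongr

lemma integrable_exp_mul_of_nonpos {μ : Measure ℝ} [IsFiniteMeasure μ] (hμ : ∀ᵐ x ∂μ, 0 ≤ x)
    {s : ℝ} (hs : s ≤ 0) : Integrable (fun x => Real.exp (s * x)) μ :=
  integrable_exp_mul_of_le hμ hs (by simp)

lemma integrable_pow_mul_cexp_neg {μ : Measure ℝ} (hμ : ∀ᵐ x ∂μ, 0 ≤ x) {a : ℝ}
    (hexp : ∀ b < a, Integrable (fun x => Real.exp (b * x)) μ) (n : ℕ) {z : ℂ} (hz : -z.re < a) :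
    Integrable (fun x : ℝ => (x : ℂ) ^ n * cexp (-(z * x))) μ := by
  have hδ : 0 < (a + z.re) / 2 := by linarith
  refine ((hexp ((a - z.re) / 2) (by linarith)).const_mul (n ! / ((a + z.re) / 2) ^ n)).mono'
    (by fun_prop) ?_
  filter_upwards [hμ] with x hx
  exact norm_pow_mul_cexp_neg_le hδ (by linarith) hx n

lemma hasDerivAt_pow_mul_cexp_neg (n : ℕ) (x : ℝ) (z : ℂ) :
    HasDerivAt (fun w : ℂ => (x : ℂ) ^ n * cexp (-(w * x)))
      (-((x : ℂ) ^ (n + 1) * cexp (-(z * x)))) z := by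
  refine ((((hasDerivAt_id' z).mul_const (x : ℂ)).fun_neg.cexp).const_mul
    ((x : ℂ) ^ n)).congr_deriv ?_
  ring

lemma hasDerivAt_integral_pow_mul_cexp_neg {μ : Measure ℝ} (hμ : ∀ᵐ x ∂μ, 0 ≤ x) {a : ℝ}
    (hexp : ∀ b < a, Integrable (fun x => Real.exp (b * x)) μ) (n : ℕ) {z₀ : ℂ}
    (hz₀ : -z₀.re < a) :
    HasDerivAt (fun z => ∫ x, (x : ℂ) ^ n * cexp (-(z * x)) ∂μ)
      (-∫ x, (x : ℂ) ^ (n + 1) * cexp (-(z₀ * x)) ∂μ) z₀ := by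
  set δ := (a + z₀.re) / 3 with hδ_def
  have hδ : 0 < δ := by linarith
  have hball : ∀ z ∈ ball z₀ δ, δ - z.re ≤ 2 * δ - z₀.re := fun z hz => by
    have := (abs_le.1 (abs_re_le_norm (z - z₀))).1
    rw [mem_ball, dist_eq] at hz
    simp only [sub_re] at this
    linarith
  have key := hasDerivAt_integral_of_dominated_loc_of_deriv_le (ball_mem_nhds z₀ hδ)
    (F := fun z (x : ℝ) => (x : ℂ) ^ n * cexp (-(z * x)))
    (F' := fun z (x : ℝ) => -((x : ℂ) ^ (n + 1) * cexp (-(z * x))))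
    (Eventually.of_forall fun z => by fun_prop)
    (integrable_pow_mul_cexp_neg hμ hexp n hz₀) (by fun_prop)
    (bound := fun x => (n + 1)! / δ ^ (n + 1) * Real.exp ((2 * δ - z₀.re) * x))
    (by
      filter_upwards [hμ] with x hx z hz
      rw [norm_neg]
      exact norm_pow_mul_cexp_neg_le hδ (hball z hz) hx (n + 1))
    ((hexp _ (by rw [hδ_def]; linarith)).const_mul _)
    (Eventually.of_forall fun x z _ => hasDerivAt_pow_mul_cexp_neg n x z)
  simpa only [integral_neg] using key.2

lemma iteratedDeriv_laplace {μ : Measure ℝ} (hμ : ∀ᵐ x ∂μ, 0 ≤ x) {a : ℝ}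
    (hexp : ∀ b < a, Integrable (fun x => Real.exp (b * x)) μ) (n : ℕ) {z : ℂ} (hz : -z.re < a) :
    iteratedDeriv n (laplace μ) z = (-1) ^ n * ∫ x, (x : ℂ) ^ n * cexp (-(z * x)) ∂μ := by
  induction n generalizing z with
  | zero => simp [laplace]
  | succ n ih =>
    have hU : {w : ℂ | -w.re < a} ∈ 𝓝 z := (isOpen_lt (by fun_prop) continuous_const).mem_nhds hz
    have heq : iteratedDeriv n (laplace μ)
        =ᶠ[𝓝 z] fun w => (-1) ^ n * ∫ x, (x : ℂ) ^ n * cexp (-(w * x)) ∂μ :=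
      Filter.eventually_of_mem hU fun w hw => ih hw
    have hD := hasDerivAt_integral_pow_mul_cexp_neg hμ hexp n hz
    rw [iteratedDeriv_succ, heq.deriv_eq, (hD.const_mul _).deriv]
    ring

lemma analyticOnNhd_laplace {μ : Measure ℝ} (hμ : ∀ᵐ x ∂μ, 0 ≤ x) {a : ℝ}
    (hexp : ∀ b < a, Integrable (fun x => Real.exp (b * x)) μ) :
    AnalyticOnNhd ℂ (laplace μ) {z | -z.re < a} := by
  refine DifferentiableOn.analyticOnNhd (fun z hz => ?_) (isOpen_lt (by fun_prop) continuous_const)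
  have h := (hasDerivAt_integral_pow_mul_cexp_neg hμ hexp 0 hz).differentiableAt
  simp only [pow_zero, one_mul] at h
  exact h.differentiableWithinAt

lemma AnalyticOnNhd.eqOn_of_preconnected_of_eq_on_Ioo {f g : ℂ → ℂ} {U : Set ℂ}
    (hf : AnalyticOnNhd ℂ f U) (hg : AnalyticOnNhd ℂ g U) (hU : IsPreconnected U) {a b t₀ : ℝ}
    (ht₀ : t₀ ∈ Ioo a b) (ht₀U : (t₀ : ℂ) ∈ U) (hfg : ∀ t ∈ Ioo a b, f t = g t) : EqOn f g U := by
  have hofReal : Tendsto ((↑) : ℝ → ℂ) (𝓝[≠] t₀) (𝓝[≠] (t₀ : ℂ)) :=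
    tendsto_nhdsWithin_of_tendsto_nhds_of_eventually_within _
      (continuous_ofReal.continuousWithinAt.tendsto) (eventually_nhdsWithin_of_forall
        fun t ht => by simpa using ht)
  refine hf.eqOn_of_preconnected_of_frequently_eq hg hU ht₀U (hofReal.frequently ?_)
  exact (eventually_nhdsWithin_of_eventually_nhds (Ioo_mem_nhds ht₀.1 ht₀.2)).frequently.mono hfg

lemma integral_pow_mul_cexp_neg_ofReal (μ : Measure ℝ) (n : ℕ) (t : ℝ) :
    ∫ x, (x : ℂ) ^ n * cexp (-(t * x)) ∂μ = ↑(∫ x, x ^ n * Real.exp (-(t * x)) ∂μ) := by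
  rw [← integral_complex_ofReal]
  push_cast
  rfl

lemma integrable_of_hasSum_of_nonneg {α ι : Type*} [MeasurableSpace α] [Countable ι]
    {μ : Measure α} {f : ι → α → ℝ} {g : α → ℝ} (hg : AEStronglyMeasurable g μ)
    (hf : ∀ i, Integrable (f i) μ) (hf₀ : ∀ i, 0 ≤ᵐ[μ] f i)
    (hfg : ∀ᵐ x ∂μ, HasSum (fun i => f i x) (g x)) (hsum : Summable fun i => ∫ x, f i x ∂μ) :
    Integrable g μ := by
  have hf₀' : ∀ᵐ x ∂μ, ∀ i, 0 ≤ f i x := ae_all_iff.2 hf₀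
  have hg₀ : 0 ≤ᵐ[μ] g := by
    filter_upwards [hf₀', hfg] with x hx hxg using hxg.nonneg hx
  refine ⟨hg, (hasFiniteIntegral_iff_ofReal hg₀).2 ?_⟩
  calc ∫⁻ x, ENNReal.ofReal (g x) ∂μ = ∫⁻ x, ∑' i, ENNReal.ofReal (f i x) ∂μ := by
        refine lintegral_congr_ae ?_
        filter_upwards [hf₀', hfg] with x hx hxg
        rw [← hxg.tsum_eq, ENNReal.ofReal_tsum_of_nonneg hx hxg.summable]
    _ = ∑' i, ENNReal.ofReal (∫ x, f i x ∂μ) := by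
        rw [lintegral_tsum fun i => (hf i).aemeasurable.ennreal_ofReal]
        exact tsum_congr fun i => (ofReal_integral_eq_lintegral_ofReal (hf i) (hf₀ i)).symm
    _ = ENNReal.ofReal (∑' i, ∫ x, f i x ∂μ) :=
        (ENNReal.ofReal_tsum_of_nonneg (fun i => integral_nonneg_of_ae (hf₀ i)) hsum).symm
    _ < ⊤ := ENNReal.ofReal_lt_top

lemma integrable_exp_mul_of_summable_moments {μ : Measure ℝ} [IsFiniteMeasure μ]
    (hμ : ∀ᵐ x ∂μ, 0 ≤ x) {t r : ℝ} (ht : 0 < t) (hr : 0 ≤ r)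
    (hsum : Summable fun n : ℕ => r ^ n / n ! * ∫ x, x ^ n * Real.exp (-(t * x)) ∂μ) :
    Integrable (fun x => Real.exp ((r - t) * x)) μ := by
  have hmom : ∀ n, Integrable (fun x => x ^ n * Real.exp (-(t * x))) μ := fun n =>
    (integrable_const (n ! / t ^ n : ℝ)).mono' (by fun_prop) (by
      filter_upwards [hμ] with x hx
      rw [Real.norm_of_nonneg (by positivity)]
      exact pow_mul_exp_neg_le ht hx n)
  refine integrable_of_hasSum_of_nonneg
    (f := fun n x => r ^ n / n ! * (x ^ n * Real.exp (-(t * x)))) (by fun_prop)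
    (fun n => (hmom n).const_mul _) (fun n => ?_) (Eventually.of_forall fun x => ?_) ?_
  · filter_upwards [hμ] with x hx
    positivity
  · have hexp : HasSum (fun n : ℕ => (r * x) ^ n / n !) (Real.exp (r * x)) := by
      simpa only [← Real.exp_eq_exp_ℝ] using NormedSpace.expSeries_div_hasSum_exp (r * x)
    rw [show (r - t) * x = r * x + -(t * x) by ring, Real.exp_add]
    refine (hexp.mul_right (Real.exp (-(t * x)))).congr_fun fun n => ?_
    rw [mul_pow]
    ring
  · simpa only [integral_const_mul] using hsum

lemma integrable_exp_mul_of_eqOn_laplace {μ : Measure ℝ} [IsFiniteMeasure μ]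
    (hμ : ∀ᵐ x ∂μ, 0 ≤ x) {R : ℝ} {F : ℂ → ℂ} (hF : DifferentiableOn ℂ F (ball 0 R))
    (hFL : EqOn F (laplace μ) (ball 0 R ∩ {z | 0 < z.re})) {s : ℝ} (hs : 0 ≤ s) (hsR : s < R) :
    Integrable (fun x => Real.exp (s * x)) μ := by
  set t := (R - s) / 3 with ht_def
  have ht : 0 < t := by linarith
  have htR : (t : ℂ) ∈ ball 0 R ∩ {z | 0 < z.re} := by
    refine ⟨?_, by simpa using ht⟩
    rw [mem_ball_zero_iff, norm_real, Real.norm_of_nonneg ht.le]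
    linarith
  have hsub : ball (t : ℂ) (R - t) ⊆ ball 0 R :=
    ball_subset_ball' (by simp [abs_of_pos ht])
  have hmem : ((-s : ℝ) : ℂ) ∈ ball (t : ℂ) (R - t) := by
    rw [mem_ball, dist_eq, ← ofReal_sub, norm_real, Real.norm_eq_abs, abs_of_neg (by linarith)]
    linarith
  have hderiv (n : ℕ) :
      iteratedDeriv n F t = (-1) ^ n * ↑(∫ x, x ^ n * Real.exp (-(t * x)) ∂μ) := by
    have hnhds : ball 0 R ∩ {z : ℂ | 0 < z.re} ∈ 𝓝 (t : ℂ) :=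
      (isOpen_ball.inter (isOpen_lt continuous_const continuous_re)).mem_nhds htR
    rw [Filter.EventuallyEq.iteratedDeriv_eq n (Filter.eventually_of_mem hnhds hFL),
      iteratedDeriv_laplace hμ (fun b hb => integrable_exp_mul_of_nonpos hμ hb.le) n
        (by simpa using ht), integral_pow_mul_cexp_neg_ofReal]
  have hsum : HasSum (fun n : ℕ =>
      (((s + t) ^ n / n ! * ∫ x, x ^ n * Real.exp (-(t * x)) ∂μ : ℝ) : ℂ)) (F (-s : ℝ)) := by
    refine (Complex.hasSum_taylorSeries_on_ball (hF.mono hsub) hmem).congr_fun fun n => ?_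
    have hsign : ((-1 : ℂ) ^ n) * (-1) ^ n = 1 := by rw [← mul_pow]; norm_num
    rw [hderiv, smul_eq_mul, smul_eq_mul,
      show ((-s : ℝ) : ℂ) - t = -1 * (s + t) by push_cast; ring, mul_pow]
    push_cast
    linear_combination (-((s + t : ℂ) ^ n / n ! * ↑(∫ x, x ^ n * Real.exp (-(t * x)) ∂μ))) * hsign
  simpa using integrable_exp_mul_of_summable_moments hμ ht (by positivity)
    (Complex.summable_ofReal.1 hsum.summable)

theorem statement3 (μ : Measure ℝ) [IsProbabilityMeasure μ] (hsupp : μ (Set.Ioi 0)ᶜ = 0)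
    (R : ℝ) (hR : 0 < R) (F : ℂ → ℂ)
    (hF : DifferentiableOn ℂ F (Metric.ball (0:ℂ) R))
    (hext : ∀ t : ℝ, 0 ≤ t → t < R → F t = ∫ x, Complex.exp (-(t * x)) ∂μ) :
    (∀ z : ℂ, z.re ∈ Set.Ioo (-R) 0 →
      Integrable (fun x : ℝ => Complex.exp (-(z * x))) μ) ∧
    (∀ z ∈ Metric.ball (0:ℂ) R, (∫ x, Complex.exp (-(z * x)) ∂μ) = F z) := by
  have hμ : ∀ᵐ x ∂μ, 0 ≤ x :=
    measure_mono_null (fun x (hx : ¬0 ≤ x) => show x ∉ Ioi 0 from (not_le.1 hx).not_gt) hsupp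
  have hR₂ : ((R / 2 : ℝ) : ℂ) ∈ ball (0 : ℂ) R := by
    rw [mem_ball_zero_iff, norm_real, Real.norm_of_nonneg (by positivity)]
    linarith
  have hFan := hF.analyticOnNhd isOpen_ball
  have hLan₀ : AnalyticOnNhd ℂ (laplace μ) {z | 0 < z.re} := by
    simpa using analyticOnNhd_laplace hμ (a := 0) fun b hb => integrable_exp_mul_of_nonpos hμ hb.le
  have hFL : EqOn F (laplace μ) (ball 0 R ∩ {z | 0 < z.re}) :=
    (hFan.mono inter_subset_left).eqOn_of_preconnected_of_eq_on_Ioo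
      (hLan₀.mono inter_subset_right)
      ((convex_ball 0 R).inter (convex_halfSpace_re_gt 0)).isPreconnected
      (t₀ := R / 2) ⟨by linarith, by linarith⟩ ⟨hR₂, by simpa using hR⟩
      fun t ht => hext t ht.1.le ht.2
  have hexp : ∀ b < R, Integrable (fun x => Real.exp (b * x)) μ := fun b hb =>
    integrable_exp_mul_of_le hμ (le_max_left b 0)
      (integrable_exp_mul_of_eqOn_laplace hμ hF hFL (le_max_right b 0) (max_lt hb hR))
  have hball : ball (0 : ℂ) R ⊆ {z | -z.re < R} := fun z hz =>
    (neg_le_abs z.re).trans_lt ((abs_re_le_norm z).trans_lt (mem_ball_zero_iff.1 hz))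
  have hLF : EqOn (laplace μ) F (ball 0 R) :=
    ((analyticOnNhd_laplace hμ hexp).mono hball).eqOn_of_preconnected_of_eq_on_Ioo hFan
      (convex_ball 0 R).isPreconnected (t₀ := R / 2) ⟨by linarith, by linarith⟩ hR₂
      fun t ht => (hext t ht.1.le ht.2).symm
  refine ⟨fun z hz => ?_, fun z hz => hLF hz⟩
  simpa using integrable_pow_mul_cexp_neg hμ hexp 0 (by linarith [hz.1] : -z.re < R)
end

section
/- In the setting of the Wick-A exponential, for η with 2‖η‖²_{L²} < R_A, the squared L²-norm of W_A(η) := e^{√A I(η)} / E[e^{√A I(η)}] equals L[A](−2‖η‖²₂) · (L[A](−‖η‖²₂/2))^{−2}. -/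
/-!
Conditionally on `A`, the variable `√A · G` is centred Gaussian with variance `A v`, so
`E[exp (c √A G)] = E[exp (c² v A / 2)]`; hence the squared `L²`-norm is
`E[exp (2 v A)] / E[exp (v A / 2)]²`. It remains to identify `E[exp (s A)]` with `L (-s)` for
`0 ≤ s < R`. Near a point `c < 0`, `z ↦ L (-z)` coincides with the complex moment generating
function of `A` (identity theorem), so its Taylor series at `c` has the coefficients
`E[A^n exp (c A)] / n!`. Since `L` is holomorphic on the ball of radius `R`, this series converges
at `s`; its terms are nonnegative, so by monotone convergence its sum is `E[exp (s A)]`, which is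
therefore finite and equal to `L (-s)`.
-/

open Real MeasureTheory ProbabilityTheory Filter Topology Metric
open scoped NNReal ENNReal Nat

section GaussianMixture

variable {Ω : Type*} [MeasurableSpace Ω] {P : Measure Ω} [IsFiniteMeasure P] {X Y : Ω → ℝ}

theorem lintegral_exp_mul_of_indepFun_gaussianReal (hX : AEMeasurable X P)
    (hY : AEMeasurable Y P) (hXY : IndepFun X Y P) {m : ℝ} {v : ℝ≥0}
    (hYlaw : P.map Y = gaussianReal m v) :
    ∫⁻ ω, ENNReal.ofReal (exp (X ω * Y ω)) ∂P
      = ∫⁻ ω, ENNReal.ofReal (exp (m * X ω + v * X ω ^ 2 / 2)) ∂P := by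
  have hlaw : P.map (fun ω ↦ (X ω, Y ω)) = (P.map X).prod (gaussianReal m v) := by
    rw [← hYlaw]
    exact (indepFun_iff_map_prod_eq_prod_map_map hX hY).1 hXY
  have hgauss (x : ℝ) : ∫⁻ y, ENNReal.ofReal (exp (x * y)) ∂(gaussianReal m v)
      = ENNReal.ofReal (exp (m * x + v * x ^ 2 / 2)) := by
    rw [← ofReal_integral_eq_lintegral_ofReal (integrable_exp_mul_gaussianReal x)
      (ae_of_all _ fun _ ↦ (exp_pos _).le), ← congrFun mgf_id_gaussianReal x]
    rfl
  calc ∫⁻ ω, ENNReal.ofReal (exp (X ω * Y ω)) ∂P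
      = ∫⁻ p, ENNReal.ofReal (exp (p.1 * p.2)) ∂(P.map fun ω ↦ (X ω, Y ω)) :=
        (lintegral_map' (f := fun p : ℝ × ℝ ↦ ENNReal.ofReal (exp (p.1 * p.2))) (by fun_prop)
          (hX.prodMk hY)).symm
    _ = ∫⁻ x, ∫⁻ y, ENNReal.ofReal (exp (x * y)) ∂(gaussianReal m v) ∂(P.map X) := by
        rw [hlaw, lintegral_prod _ (by fun_prop)]
    _ = ∫⁻ ω, ENNReal.ofReal (exp (m * X ω + v * X ω ^ 2 / 2)) ∂P := by
        simp_rw [hgauss]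
        exact lintegral_map' (by fun_prop) hX

theorem integral_exp_mul_sqrt_mul_of_indepFun_gaussianReal {A G : Ω → ℝ} (hA0 : ∀ ω, 0 ≤ A ω)
    (hA : Measurable A) (hG : Measurable G) (hAG : IndepFun A G P) {v : ℝ≥0}
    (hGlaw : P.map G = gaussianReal 0 v) (c : ℝ) :
    ∫ ω, exp (c * √(A ω) * G ω) ∂P = ∫ ω, exp (c ^ 2 * v / 2 * A ω) ∂P := by
  have hindep : IndepFun (fun ω ↦ c * √(A ω)) G P :=
    hAG.comp (show Measurable fun a ↦ c * √a by fun_prop) measurable_id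
  have h := lintegral_exp_mul_of_indepFun_gaussianReal (by fun_prop) hG.aemeasurable hindep hGlaw
  simp_rw [mul_pow, sq_sqrt (hA0 _), zero_mul, zero_add] at h
  rw [integral_eq_lintegral_of_nonneg_ae (ae_of_all _ fun _ ↦ (exp_pos _).le) (by fun_prop),
    integral_eq_lintegral_of_nonneg_ae (ae_of_all _ fun _ ↦ (exp_pos _).le) (by fun_prop), h]
  congr 3 with ω
  ring_nf

end GaussianMixture

theorem AnalyticAt.eventuallyEq_of_eventuallyEq_ofReal {f g : ℂ → ℂ} {x : ℝ}
    (hf : AnalyticAt ℂ f x) (hg : AnalyticAt ℂ g x) (h : ∀ᶠ y : ℝ in 𝓝 x, f y = g y) :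
    f =ᶠ[𝓝 (x : ℂ)] g := by
  have hofReal : Tendsto ((↑) : ℝ → ℂ) (𝓝[≠] x) (𝓝[≠] (x : ℂ)) :=
    Complex.continuous_ofReal.continuousWithinAt.tendsto_nhdsWithin fun _ _ ↦ by simp_all
  change ∀ᶠ z in 𝓝 (x : ℂ), f z = g z
  rw [← hf.frequently_eq_iff_eventually_eq hg]
  exact hofReal.frequently (h.filter_mono nhdsWithin_le_nhds).frequently

section LaplaceTransform

variable {Ω : Type*} [MeasurableSpace Ω] {μ : Measure Ω} [IsFiniteMeasure μ] {X : Ω → ℝ}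

theorem Iio_subset_interior_integrableExpSet (hX : AEMeasurable X μ) (hX0 : ∀ ω, 0 ≤ X ω) :
    Set.Iio 0 ⊆ interior (integrableExpSet X μ) := by
  refine isOpen_Iio.subset_interior_iff.mpr fun t ht ↦ ?_
  refine (integrable_const (1 : ℝ)).mono' (by fun_prop) (ae_of_all _ fun ω ↦ ?_)
  rw [norm_of_nonneg (exp_pos _).le, exp_le_one_iff]
  exact mul_nonpos_of_nonpos_of_nonneg ht.le (hX0 ω)

theorem hasSum_integral_exp_series_of_differentiableOn (hX : AEMeasurable X μ)
    (hX0 : ∀ ω, 0 ≤ X ω) {R : ℝ} {F : ℂ → ℂ} (hF : DifferentiableOn ℂ F (ball 0 R))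
    (hFX : ∀ t : ℝ, -R < t → t < 0 → F t = complexMGF X μ t) {c s : ℝ} (hc : c < 0)
    (hs : |s - c| < R + c) :
    HasSum (fun n ↦ ((∫ ω, ((s - c) * X ω) ^ n / n ! * exp (c * X ω) ∂μ : ℝ) : ℂ)) (F s) := by
  have hcR : -R < c := by linarith [abs_nonneg (s - c)]
  have hc_int : (c : ℂ).re ∈ interior (integrableExpSet X μ) :=
    Iio_subset_interior_integrableExpSet hX hX0 hc
  have hFc : AnalyticAt ℂ F c := hF.analyticAt (isOpen_ball.mem_nhds (by
    rw [mem_ball_zero_iff, Complex.norm_real, norm_of_nonpos hc.le]; linarith))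
  have hMc : AnalyticAt ℂ (complexMGF X μ) c := analyticAt_complexMGF hc_int
  have hFM : F =ᶠ[𝓝 (c : ℂ)] complexMGF X μ := hFc.eventuallyEq_of_eventuallyEq_ofReal hMc <|
    eventually_of_mem (Ioo_mem_nhds hcR hc) fun t ht ↦ hFX t ht.1 ht.2
  have hball : ball (c : ℂ) (R + c) ⊆ ball 0 R := ball_subset_ball' (by
    rw [Complex.dist_eq, sub_zero, Complex.norm_real, norm_of_nonpos hc.le]; linarith)
  have hsc : (s : ℂ) ∈ ball (c : ℂ) (R + c) := by
    rwa [mem_ball, Complex.dist_eq, ← Complex.ofReal_sub, Complex.norm_real, Real.norm_eq_abs]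
  have hterm (n : ℕ) : ((∫ ω, ((s - c) * X ω) ^ n / n ! * exp (c * X ω) ∂μ : ℝ) : ℂ)
      = (n ! : ℂ)⁻¹ • ((s : ℂ) - c) ^ n • iteratedDeriv n F c := by
    rw [(hFM.iteratedDeriv_eq n).trans (iteratedDeriv_complexMGF hc_int n),
      ← integral_complex_ofReal, smul_eq_mul, smul_eq_mul, ← integral_const_mul,
      ← integral_const_mul]
    refine integral_congr_ae (ae_of_all _ fun ω ↦ ?_)
    push_cast
    rw [mul_pow]
    ring
  simpa only [hterm] using Complex.hasSum_taylorSeries_on_ball (hF.mono hball) hsc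

theorem lintegral_ofReal_exp_mul_eq_tsum (hX : AEMeasurable X μ) (hX0 : ∀ ω, 0 ≤ X ω)
    {c s : ℝ} (hc : c < 0) (hcs : c ≤ s) :
    ∫⁻ ω, ENNReal.ofReal (exp (s * X ω)) ∂μ
      = ∑' n : ℕ, ENNReal.ofReal (∫ ω, ((s - c) * X ω) ^ n / n ! * exp (c * X ω) ∂μ) := by
  set term : ℕ → Ω → ℝ := fun n ω ↦ ((s - c) * X ω) ^ n / n ! * exp (c * X ω)
  have hterm_nonneg (n : ℕ) (ω : Ω) : 0 ≤ term n ω := by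
    have := mul_nonneg (sub_nonneg.2 hcs) (hX0 ω)
    positivity
  have hterm_sum (ω : Ω) : HasSum (fun n ↦ term n ω) (exp (s * X ω)) := by
    have h := (NormedSpace.expSeries_div_hasSum_exp ((s - c) * X ω)).mul_right (exp (c * X ω))
    rwa [← exp_eq_exp_ℝ, ← exp_add, show (s - c) * X ω + c * X ω = s * X ω by ring] at h
  have hterm_int (n : ℕ) : Integrable (term n) μ := by
    refine ((integrable_pow_mul_exp_of_mem_interior_integrableExpSet
      (Iio_subset_interior_integrableExpSet hX hX0 hc) n).const_mul ((s - c) ^ n / n !)).congr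
      (ae_of_all _ fun ω ↦ ?_)
    simp only [term, mul_pow]
    ring
  calc ∫⁻ ω, ENNReal.ofReal (exp (s * X ω)) ∂μ
      = ∫⁻ ω, ∑' n, ENNReal.ofReal (term n ω) ∂μ := lintegral_congr fun ω ↦ by
        rw [← (hterm_sum ω).tsum_eq,
          ENNReal.ofReal_tsum_of_nonneg (hterm_nonneg · ω) (hterm_sum ω).summable]
    _ = ∑' n, ∫⁻ ω, ENNReal.ofReal (term n ω) ∂μ :=
        lintegral_tsum fun n ↦ (hterm_int n).aemeasurable.ennreal_ofReal
    _ = _ := tsum_congr fun n ↦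
        (ofReal_integral_eq_lintegral_ofReal (hterm_int n) (ae_of_all _ (hterm_nonneg n))).symm

theorem laplace_neg_eq_integral_exp (hX : AEMeasurable X μ) (hX0 : ∀ ω, 0 ≤ X ω) {R : ℝ}
    {L : ℂ → ℂ} (hL : DifferentiableOn ℂ L (ball 0 R))
    (hLX : ∀ t : ℝ, 0 < t → t < R → L t = ∫ ω, Complex.exp (-(t * X ω)) ∂μ)
    {s : ℝ} (hs0 : 0 ≤ s) (hsR : s < R) :
    L (-s) = ∫ ω, exp (s * X ω) ∂μ := by
  set c := (s - R) / 3 with hc_def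
  have hc : c < 0 := by linarith
  have hF : DifferentiableOn ℂ (fun z ↦ L (-z)) (ball 0 R) :=
    hL.comp (differentiableOn_neg _) fun z hz ↦ by simpa using hz
  have hFX (t : ℝ) (htR : -R < t) (ht : t < 0) : L (-t) = complexMGF X μ t := by
    rw [← Complex.ofReal_neg, hLX (-t) (by linarith) (by linarith), complexMGF]
    push_cast
    simp_rw [neg_mul, neg_neg]
  have hsum := hasSum_integral_exp_series_of_differentiableOn hX hX0 hF hFX hc
    (s := s) (by rw [abs_of_nonneg (by linarith)]; linarith)
  set b : ℕ → ℝ := fun n ↦ ∫ ω, ((s - c) * X ω) ^ n / n ! * exp (c * X ω) ∂μ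
  have hb_nonneg (n : ℕ) : 0 ≤ b n := integral_nonneg fun ω ↦ by
    have := mul_nonneg (sub_nonneg.2 (hc.le.trans hs0)) (hX0 ω)
    positivity
  have hb : Summable b := Complex.summable_ofReal.1 hsum.summable
  rw [← hsum.tsum_eq, ← Complex.ofReal_tsum, integral_eq_lintegral_of_nonneg_ae
    (ae_of_all _ fun _ ↦ (exp_pos _).le) (by fun_prop),
    lintegral_ofReal_exp_mul_eq_tsum hX hX0 hc (hc.le.trans hs0),
    ← ENNReal.ofReal_tsum_of_nonneg hb_nonneg hb, ENNReal.toReal_ofReal (tsum_nonneg hb_nonneg)]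

end LaplaceTransform

theorem statement6_general {Ω : Type*} [MeasurableSpace Ω] (P : Measure Ω) [IsProbabilityMeasure P]
    (A G : Ω → ℝ) (hA : ∀ ω, 0 < A ω) (hAmeas : Measurable A) (hGmeas : Measurable G)
    (v : NNReal) (hGlaw : Measure.map G P = gaussianReal 0 v)
    (hindep : IndepFun A G P)
    (R : ℝ) (L : ℂ → ℂ)
    (hL : DifferentiableOn ℂ L (Metric.ball (0:ℂ) R))
    (hLlaplace : ∀ t : ℝ, 0 ≤ t → t < R → L t = ∫ ω, Complex.exp (-(t * A ω)) ∂P)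
    (hv : 2 * (v : ℝ) < R) :
    ((∫ ω, (Real.exp (Real.sqrt (A ω) * G ω) /
        (∫ ω', Real.exp (Real.sqrt (A ω') * G ω') ∂P)) ^ 2 ∂P : ℝ) : ℂ) =
      L (-(2 * (v : ℝ))) * (L (-((v : ℝ) / 2)))⁻¹ ^ 2 := by
  have hA0 (ω : Ω) : 0 ≤ A ω := (hA ω).le
  have hLaplace (s : ℝ) (hs0 : 0 ≤ s) (hsR : s < R) : L (-s) = ∫ ω, exp (s * A ω) ∂P :=
    laplace_neg_eq_integral_exp hAmeas.aemeasurable hA0 hL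
      (fun t ht htR ↦ hLlaplace t ht.le htR) hs0 hsR
  have hmix := integral_exp_mul_sqrt_mul_of_indepFun_gaussianReal hA0 hAmeas hGmeas hindep hGlaw
  have hL1 := hLaplace (v / 2) (by positivity) (by linarith [v.coe_nonneg])
  have hL2 := hLaplace (2 * v) (by positivity) hv
  have hE1 : ∫ ω, exp (√(A ω) * G ω) ∂P = ∫ ω, exp (v / 2 * A ω) ∂P := by
    simpa using hmix 1
  have hE2 : ∫ ω, exp (2 * √(A ω) * G ω) ∂P = ∫ ω, exp (2 * v * A ω) ∂P := by
    rw [hmix]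
    ring_nf
  have hsq (ω : Ω) (E : ℝ) : (exp (√(A ω) * G ω) / E) ^ 2 = exp (2 * √(A ω) * G ω) / E ^ 2 := by
    rw [div_pow, ← exp_nat_mul]
    ring_nf
  simp_rw [hsq, integral_div, hE1, hE2]
  push_cast at hL1 hL2 ⊢
  rw [hL1, hL2, div_eq_mul_inv, inv_pow]

/-- Squared `L²`-norm of the Wick-`A` exponential
`W_A(η) = e^{√A I(η)} / E[e^{√A I(η)}]`, where `G = I(η)` is centered Gaussian with
variance `v = ‖η‖²₂` independent of `A`, and `L` is the holomorphic extension of the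
Laplace transform of `A`. -/
theorem statement6 {Ω : Type*} [MeasurableSpace Ω] (P : Measure Ω) [IsProbabilityMeasure P]
    (A G : Ω → ℝ) (hA : ∀ ω, 0 < A ω) (hAmeas : Measurable A) (hGmeas : Measurable G)
    (v : NNReal) (hGlaw : Measure.map G P = gaussianReal 0 v)
    (hindep : IndepFun A G P)
    (R : ℝ) (hR : 0 < R) (L : ℂ → ℂ)
    (hL : DifferentiableOn ℂ L (Metric.ball (0:ℂ) R))
    (hLlaplace : ∀ t : ℝ, 0 ≤ t → t < R → L t = ∫ ω, Complex.exp (-(t * A ω)) ∂P)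
    (hv : 2 * (v : ℝ) < R) :
    ((∫ ω, (Real.exp (Real.sqrt (A ω) * G ω) /
        (∫ ω', Real.exp (Real.sqrt (A ω') * G ω') ∂P)) ^ 2 ∂P : ℝ) : ℂ) =
      L (-(2 * (v : ℝ))) * (L (-((v : ℝ) / 2)))⁻¹ ^ 2 :=
  statement6_general P A G hA hAmeas hGmeas v hGlaw hindep R L hL hLlaplace hv
end

section
/- Let γ > 1, ε > 0, and k : (0,∞)×(0,∞) → ℝ be homogeneous of degree γ (i.e. k(t, ts) = t^γ k(1,s)) with k(1,·) ∈ L^{1+ε}(0,1). Define κ(t,s) := k(t^{1/γ}, s^{1/γ}) / (γ s^{(γ−1)/γ}). Then κ is homogeneous of degree 1/γ and there exists δ ∈ (0, ε) such that κ(1,·) ∈ L^{1+δ}(0,1). -/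
open MeasureTheory Set

/-!
Substituting `s = u ^ γ` turns `∫₀¹ |κ(1,s)|^{1+δ} ds` into `∫₀¹ |k(1,u)|^{1+δ} w(u)^{-δ} du`
with `w(u) = γ u^{γ-1}`. Young's inequality for the conjugate exponents
`p = (1+ε)/(1+δ)` and `q = (1+ε)/(ε-δ)` dominates this integrand by
`|k(1,u)|^{1+ε}/p + w(u)^{-δq}/q`, and `w^{-δq}` is integrable near `0` as soon as
`(γ-1) δ q < 1`, which holds for `δ` small.
-/

noncomputable def rescaledKernel (γ : ℝ) (k : ℝ → ℝ → ℝ) (t s : ℝ) : ℝ :=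
  k (t ^ (1 / γ)) (s ^ (1 / γ)) / (γ * s ^ ((γ - 1) / γ))

theorem rescaledKernel_homogeneous {γ θ : ℝ} (hγ : 0 < γ) {k : ℝ → ℝ → ℝ}
    (hhom : ∀ t : ℝ, 0 < t → ∀ s ∈ Ioo (0 : ℝ) 1, k t (t * s) = t ^ θ * k 1 s)
    {t s : ℝ} (ht : 0 < t) (hs : s ∈ Ioo (0 : ℝ) 1) :
    rescaledKernel γ k t (t * s) = t ^ ((θ + 1 - γ) / γ) * rescaledKernel γ k 1 s := by
  have hs' : s ^ (1 / γ) ∈ Ioo (0 : ℝ) 1 :=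
    ⟨Real.rpow_pos_of_pos hs.1 _, Real.rpow_lt_one hs.1.le hs.2 (by positivity)⟩
  have ht_pow : (t ^ (1 / γ)) ^ θ = t ^ ((θ + 1 - γ) / γ) * t ^ ((γ - 1) / γ) := by
    rw [← Real.rpow_mul ht.le, ← Real.rpow_add ht]
    congr 1
    ring
  unfold rescaledKernel
  rw [Real.mul_rpow ht.le hs.1.le, Real.mul_rpow ht.le hs.1.le,
    hhom _ (Real.rpow_pos_of_pos ht _) _ hs', ht_pow, Real.one_rpow]
  have : t ^ ((γ - 1) / γ) ≠ 0 := (Real.rpow_pos_of_pos ht _).ne'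
  field_simp

theorem rescaledKernel_one_rpow {γ : ℝ} (hγ : 0 < γ) (k : ℝ → ℝ → ℝ) {u : ℝ} (hu : 0 < u) :
    rescaledKernel γ k 1 (u ^ γ) = k 1 u / (γ * u ^ (γ - 1)) := by
  unfold rescaledKernel
  rw [Real.one_rpow, ← Real.rpow_mul hu.le, ← Real.rpow_mul hu.le, mul_one_div_cancel hγ.ne',
    Real.rpow_one, mul_div_cancel₀ _ hγ.ne']

theorem integrableOn_Ioo_zero_one_comp_rpow_iff {E : Type*} [NormedAddCommGroup E]
    [NormedSpace ℝ E] (f : ℝ → E) {γ : ℝ} (hγ : 0 < γ) :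
    IntegrableOn (fun u => (γ * u ^ (γ - 1)) • f (u ^ γ)) (Ioo 0 1) ↔
      IntegrableOn f (Ioo 0 1) := by
  have hderiv : ∀ u ∈ Ioo (0 : ℝ) 1,
      HasDerivWithinAt (fun u : ℝ => u ^ γ) (γ * u ^ (γ - 1)) (Ioo 0 1) u := fun u hu =>
    (Real.hasDerivAt_rpow_const (Or.inl hu.1.ne')).hasDerivWithinAt
  have hinj : InjOn (fun u : ℝ => u ^ γ) (Ioo 0 1) := fun a ha b hb hab =>
    Real.rpow_left_injOn hγ.ne' ha.1.le hb.1.le hab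
  have himage : (fun u : ℝ => u ^ γ) '' Ioo 0 1 = Ioo 0 1 := by
    refine Subset.antisymm ?_ fun s hs => ⟨s ^ γ⁻¹, ?_, Real.rpow_inv_rpow hs.1.le hγ.ne'⟩
    · rintro _ ⟨u, hu, rfl⟩
      exact ⟨Real.rpow_pos_of_pos hu.1 _, Real.rpow_lt_one hu.1.le hu.2 hγ⟩
    · exact ⟨Real.rpow_pos_of_pos hs.1 _, Real.rpow_lt_one hs.1.le hs.2 (inv_pos.2 hγ)⟩
  have h := integrableOn_image_iff_integrableOn_abs_deriv_smul measurableSet_Ioo hderiv hinj f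
  rw [himage] at h
  rw [h]
  refine integrableOn_congr_fun (fun u hu => ?_) measurableSet_Ioo
  rw [abs_of_pos (by have := hu.1; positivity)]

section Young

variable {α : Type*} [MeasurableSpace α] {μ : Measure α}

theorem aestronglyMeasurable_of_rpow {g : α → ℝ} {c : ℝ} (hc : 0 < c) (hg0 : ∀ᵐ x ∂μ, 0 ≤ g x)
    (hg : AEStronglyMeasurable (fun x => g x ^ c) μ) : AEStronglyMeasurable g μ :=
  ((Real.continuous_rpow_const (inv_pos.2 hc).le).comp_aestronglyMeasurable hg).congr <|
    hg0.mono fun _ hx => Real.rpow_rpow_inv hx hc.ne'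

theorem IntegrableOn.mul_of_holderConjugate {g h : α → ℝ} {s : Set α} {p q : ℝ}
    (hpq : p.HolderConjugate q) (hs : MeasurableSet s) (hg0 : ∀ x ∈ s, 0 ≤ g x)
    (hh0 : ∀ x ∈ s, 0 ≤ h x) (hg : IntegrableOn (fun x => g x ^ p) s μ)
    (hh : IntegrableOn (fun x => h x ^ q) s μ) :
    IntegrableOn (fun x => g x * h x) s μ := by
  have hgm := aestronglyMeasurable_of_rpow hpq.pos ((ae_restrict_iff' hs).2 (.of_forall hg0)) hg.1
  have hhm := aestronglyMeasurable_of_rpow hpq.symm.pos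
    ((ae_restrict_iff' hs).2 (.of_forall hh0)) hh.1
  refine ((hg.div_const p).add (hh.div_const q)).mono' (hgm.mul hhm) ?_
  filter_upwards [ae_restrict_mem hs] with x hx
  rw [Real.norm_of_nonneg (mul_nonneg (hg0 x hx) (hh0 x hx))]
  exact Real.young_inequality_of_nonneg (hg0 x hx) (hh0 x hx) hpq

end Young

theorem integrableOn_abs_rescaledKernel_rpow {γ ε δ : ℝ} (hγ : 0 < γ) (hδ : δ ∈ Ioo 0 ε)
    (hδγ : (γ - 1) * δ * (1 + ε) < ε - δ) {k : ℝ → ℝ → ℝ}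
    (hkL : IntegrableOn (fun s => |k 1 s| ^ (1 + ε)) (Ioo 0 1)) :
    IntegrableOn (fun s => |rescaledKernel γ k 1 s| ^ (1 + δ)) (Ioo 0 1) := by
  obtain ⟨hδ0, hδε⟩ := hδ
  have hεδ : 0 < ε - δ := sub_pos.2 hδε
  set w : ℝ → ℝ := fun u => γ * u ^ (γ - 1)
  have hw : ∀ u ∈ Ioo (0 : ℝ) 1, 0 < w u := fun u hu => by have := hu.1; positivity
  set p := (1 + ε) / (1 + δ)
  set q := (1 + ε) / (ε - δ)
  have hpq : p.HolderConjugate q := by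
    refine Real.holderConjugate_iff.2 ⟨(one_lt_div (by linarith)).2 (by linarith), ?_⟩
    have : 1 + ε ≠ 0 := by linarith
    simp only [p, q, inv_div]
    field_simp
    ring
  have hsubst : ∀ u ∈ Ioo (0 : ℝ) 1,
      w u • |rescaledKernel γ k 1 (u ^ γ)| ^ (1 + δ) = |k 1 u| ^ (1 + δ) * w u ^ (-δ) := by
    intro u hu
    have hwu := hw u hu
    rw [smul_eq_mul, rescaledKernel_one_rpow hγ k hu.1, abs_div, abs_of_pos hwu,
      Real.div_rpow (abs_nonneg _) hwu.le, Real.rpow_add hwu, Real.rpow_one, Real.rpow_neg hwu.le]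
    have : w u ^ δ ≠ 0 := (Real.rpow_pos_of_pos hwu _).ne'
    field_simp
  rw [← integrableOn_Ioo_zero_one_comp_rpow_iff _ hγ, integrableOn_congr_fun hsubst measurableSet_Ioo]
  refine IntegrableOn.mul_of_holderConjugate hpq measurableSet_Ioo (fun _ _ => by positivity)
    (fun u hu => (Real.rpow_pos_of_pos (hw u hu) _).le) ?_ ?_
  · refine hkL.congr_fun (fun u _ => ?_) measurableSet_Ioo
    rw [← Real.rpow_mul (abs_nonneg _), mul_div_cancel₀ _ (by linarith : 1 + δ ≠ 0)]
  · have hexp : -1 < (γ - 1) * (-δ * q) := by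
      have : (γ - 1) * δ * (1 + ε) / (ε - δ) < 1 := (div_lt_one hεδ).2 hδγ
      have : (γ - 1) * (-δ * q) = -((γ - 1) * δ * (1 + ε) / (ε - δ)) := by ring
      linarith
    refine IntegrableOn.congr_fun (((intervalIntegral.integrableOn_Ioo_rpow_iff one_pos).2
      hexp).const_mul (γ ^ (-δ * q))) (fun u hu => ?_) measurableSet_Ioo
    rw [← Real.rpow_mul (hw u hu).le, Real.mul_rpow hγ.le (by have := hu.1; positivity),
      ← Real.rpow_mul hu.1.le]

/-- If `k` is homogeneous of degree `γ > 1` with `k(1,·) ∈ L^{1+ε}(0,1)`, then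
`κ(t,s) := k(t^{1/γ}, s^{1/γ}) / (γ s^{(γ-1)/γ})` is homogeneous of degree `1/γ` and
`κ(1,·) ∈ L^{1+δ}(0,1)` for some `δ ∈ (0, ε)`. -/
theorem statement17 (γ ε : ℝ) (hγ : 1 < γ) (hε : 0 < ε)
    (k : ℝ → ℝ → ℝ)
    (hhom : ∀ t : ℝ, 0 < t → ∀ s ∈ Set.Ioo (0:ℝ) 1, k t (t * s) = t ^ γ * k 1 s)
    (hkL : IntegrableOn (fun s => |k 1 s| ^ (1 + ε)) (Set.Ioo (0:ℝ) 1)) :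
    (∀ t : ℝ, 0 < t → ∀ s ∈ Set.Ioo (0:ℝ) 1,
      (fun t s => k (t ^ (1/γ)) (s ^ (1/γ)) / (γ * s ^ ((γ - 1)/γ))) t (t * s) =
        t ^ (1/γ) * (fun t s => k (t ^ (1/γ)) (s ^ (1/γ)) / (γ * s ^ ((γ - 1)/γ))) 1 s) ∧
    ∃ δ ∈ Set.Ioo 0 ε,
      IntegrableOn
        (fun s => |k (1 ^ (1/γ)) (s ^ (1/γ)) / (γ * s ^ ((γ - 1)/γ))| ^ (1 + δ))
        (Set.Ioo (0:ℝ) 1) := by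
  have hγ0 : 0 < γ := by linarith
  refine ⟨fun t ht s hs => ?_, ?_⟩
  · have h := rescaledKernel_homogeneous hγ0 hhom ht hs
    rw [add_sub_cancel_left] at h
    exact h
  · -- with `D = (γ-1)(1+ε) + 1` the condition `(γ-1) δ (1+ε) < ε - δ` reads `D δ < ε`
    obtain ⟨δ, hδ, hδγ⟩ : ∃ δ ∈ Ioo 0 ε, (γ - 1) * δ * (1 + ε) < ε - δ := by
      set D := (γ - 1) * (1 + ε) + 1
      have hD : 1 < D := by nlinarith
      refine ⟨ε / (2 * D), ⟨by positivity, div_lt_self hε (by linarith)⟩, ?_⟩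
      have h1 : (γ - 1) * (ε / (2 * D)) * (1 + ε) = (D - 1) * (ε / (2 * D)) := by
        simp only [D]; ring
      have h2 : (D - 1) * (ε / (2 * D)) + ε / (2 * D) = ε / 2 := by field_simp; ring
      linarith
    exact ⟨δ, hδ, integrableOn_abs_rescaledKernel_rpow hγ0 hδ hδγ hkL⟩
end

section
/- For ν > 0, ρ > 0, the Mellin transform of the Krätzel probability density f̃^ν_ρ(x) := (ρ / Γ((ν+1)/ρ)) Z^ν_ρ(x) 1_{(0,∞)}(x), where Z^ν_ρ(u) := ∫_0^∞ λ^{ν−1} e^{−u/λ} e^{−λ^ρ} dλ, is given for Re s > 0 by M[f̃^ν_ρ](s) := ∫_0^∞ f̃^ν_ρ(t) t^{s−1} dt = Γ(s) Γ((s+ν)/ρ) / Γ((ν+1)/ρ). -/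
open MeasureTheory Set Complex

/-- The Krätzel function `Z^ν_ρ(u) = ∫_0^∞ λ^{ν-1} e^{-u/λ} e^{-λ^ρ} dλ`. -/
noncomputable def kraetzel (ν ρ u : ℝ) : ℝ :=
  ∫ l in Set.Ioi (0:ℝ), l ^ (ν - 1) * Real.exp (-(u / l)) * Real.exp (-(l ^ ρ))

/-- The Krätzel probability density `f̃^ν_ρ(x) = (ρ / Γ((ν+1)/ρ)) Z^ν_ρ(x) 1_{(0,∞)}(x)`. -/
noncomputable def kraetzelPDF (ν ρ x : ℝ) : ℝ :=
  if 0 < x then ρ / Real.Gamma ((ν + 1) / ρ) * kraetzel ν ρ x else 0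

/-!
`Z^ν_ρ` is a multiplicative convolution: `Z^ν_ρ(u) = ∫_0^∞ e^{-u/λ} (λ^ν e^{-λ^ρ}) dλ/λ`. The Mellin
transform turns such a convolution into the product of the Mellin transforms (Fubini, justified
by the absolute convergence of both Mellin integrals at `Re s`), and these are `Γ(s)` and
`Γ((s+ν)/ρ)/ρ`.
-/

section Scaling

variable {E : Type*} [NormedAddCommGroup E] [NormedSpace ℂ E] {l : ℝ}

theorem mellin_comp_div_const (f : ℝ → E) (s : ℂ) (hl : 0 < l) :
    mellin (fun t => f (t / l)) s = (l : ℂ) ^ s • mellin f s := by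
  have h := mellin_comp_mul_left f s (inv_pos.2 hl)
  simp only [inv_mul_eq_div] at h
  rw [h, ofReal_inv, inv_cpow _ _ (by simp [arg_ofReal_of_nonneg hl.le, Real.pi_ne_zero.symm]),
    cpow_neg, inv_inv]

theorem MellinConvergent.comp_div_const {f : ℝ → E} {s : ℂ} (hf : MellinConvergent f s) (hl : 0 < l) :
    MellinConvergent (fun t => f (t / l)) s := by
  simpa only [inv_mul_eq_div] using (MellinConvergent.comp_mul_left (inv_pos.2 hl)).2 hf

theorem integral_norm_cpow_smul_comp_div_const (f : ℝ → E) (s : ℂ) (hl : 0 < l) :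
    ∫ t in Ioi (0:ℝ), ‖(t : ℂ) ^ (s - 1) • f (t / l)‖ =
      l ^ s.re * ∫ t in Ioi (0:ℝ), ‖(t : ℂ) ^ (s - 1) • f t‖ := by
  have hscale : ∀ t ∈ Ioi (0:ℝ), ‖(t : ℂ) ^ (s - 1) • f (t / l)‖ =
      l ^ (s.re - 1) * ‖((l⁻¹ * t : ℝ) : ℂ) ^ (s - 1) • f (l⁻¹ * t)‖ := fun t ht => by
    have ht : 0 < t := ht
    rw [norm_smul, norm_smul, norm_cpow_eq_rpow_re_of_pos ht,
      norm_cpow_eq_rpow_re_of_pos (by positivity), sub_re, one_re,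
      Real.mul_rpow (by positivity) ht.le, Real.inv_rpow hl.le, inv_mul_eq_div, inv_mul_eq_div,
      ← mul_assoc, mul_div_cancel₀ _ (by positivity)]
  rw [setIntegral_congr_fun measurableSet_Ioi hscale, integral_const_mul,
    integral_comp_mul_left_Ioi (fun t : ℝ => ‖(t : ℂ) ^ (s - 1) • f t‖) 0 (inv_pos.2 hl),
    mul_zero, inv_inv, smul_eq_mul, ← mul_assoc, ← Real.rpow_add_one hl.ne', sub_add_cancel]

end Scaling

noncomputable def mellinConvolution (f g : ℝ → ℂ) (t : ℝ) : ℂ :=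
  ∫ l in Ioi (0:ℝ), f (t / l) * g l / l

section MellinConvolution

variable {f g : ℝ → ℂ} {s : ℂ}

theorem integrable_mellinConvolution_integrand (hf : Measurable f) (hg : Measurable g)
    (hfs : MellinConvergent f s) (hgs : MellinConvergent g s) :
    Integrable (fun p : ℝ × ℝ => (p.1 : ℂ) ^ (s - 1) * (f (p.1 / p.2) * g p.2 / p.2))
      ((volume.restrict (Ioi 0)).prod (volume.restrict (Ioi 0))) := by
  have hmeas : Measurable fun p : ℝ × ℝ =>
      (p.1 : ℂ) ^ (s - 1) * (f (p.1 / p.2) * g p.2 / p.2) := by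
    fun_prop
  rw [integrable_prod_iff' hmeas.aestronglyMeasurable]
  constructor
  · filter_upwards [self_mem_ae_restrict measurableSet_Ioi] with l hl
    refine ((hfs.comp_div_const hl).const_mul (g l / l)).congr
      (Filter.Eventually.of_forall fun t => ?_)
    simp only [smul_eq_mul]
    ring
  · refine IntegrableOn.congr_fun
      (hgs.norm.const_mul (∫ t in Ioi (0:ℝ), ‖(t : ℂ) ^ (s - 1) • f t‖)) (fun l hl => ?_)
      measurableSet_Ioi
    have hl : 0 < l := hl
    have hsplit : ∀ t : ℝ, ‖(t : ℂ) ^ (s - 1) * (f (t / l) * g l / l)‖ =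
        ‖g l‖ / l * ‖(t : ℂ) ^ (s - 1) • f (t / l)‖ := fun t => by
      simp only [norm_mul, norm_smul, norm_div, norm_real, Real.norm_of_nonneg hl.le]
      ring
    simp only [hsplit]
    rw [integral_const_mul, integral_norm_cpow_smul_comp_div_const f s hl, norm_smul,
      norm_cpow_eq_rpow_re_of_pos hl, sub_re, one_re, Real.rpow_sub_one hl.ne']
    ring

theorem mellin_mellinConvolution (hf : Measurable f) (hg : Measurable g)
    (hfs : MellinConvergent f s) (hgs : MellinConvergent g s) :
    mellin (mellinConvolution f g) s = mellin f s * mellin g s := by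
  calc mellin (mellinConvolution f g) s
      = ∫ t in Ioi (0:ℝ), ∫ l in Ioi (0:ℝ), (t : ℂ) ^ (s - 1) * (f (t / l) * g l / l) := by
        simp only [mellin, mellinConvolution, smul_eq_mul, integral_const_mul]
    _ = ∫ l in Ioi (0:ℝ), ∫ t in Ioi (0:ℝ), (t : ℂ) ^ (s - 1) * (f (t / l) * g l / l) :=
        integral_integral_swap (integrable_mellinConvolution_integrand hf hg hfs hgs)
    _ = ∫ l in Ioi (0:ℝ), mellin f s * ((l : ℂ) ^ (s - 1) * g l) := by
        refine setIntegral_congr_fun measurableSet_Ioi fun l hl => ?_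
        have hl : 0 < l := hl
        have hscale := mellin_comp_div_const f s hl
        simp only [mellin, smul_eq_mul] at hscale
        have hl0 : (l : ℂ) ≠ 0 := ofReal_ne_zero.2 hl.ne'
        calc ∫ t in Ioi (0:ℝ), (t : ℂ) ^ (s - 1) * (f (t / l) * g l / l)
            = g l / l * ∫ t in Ioi (0:ℝ), (t : ℂ) ^ (s - 1) * f (t / l) := by
              rw [← integral_const_mul]
              congr 1 with t
              ring
          _ = mellin f s * ((l : ℂ) ^ (s - 1) * g l) := by
              rw [hscale, cpow_sub _ _ hl0, cpow_one]
              simp only [mellin, smul_eq_mul]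
              field_simp
    _ = mellin f s * mellin g s := by
        simp only [mellin, smul_eq_mul, integral_const_mul]

end MellinConvolution

theorem mellinConvergent_exp_neg {s : ℂ} (hs : 0 < s.re) :
    MellinConvergent (fun t : ℝ => (Real.exp (-t) : ℂ)) s := by
  simpa only [MellinConvergent, smul_eq_mul, mul_comm] using GammaIntegral_convergent hs

theorem mellin_exp_neg {s : ℂ} (hs : 0 < s.re) :
    mellin (fun t : ℝ => (Real.exp (-t) : ℂ)) s = Gamma s := by
  rw [← GammaIntegral_eq_mellin, Gamma_eq_integral hs]

theorem mellinConvergent_exp_neg_rpow {ρ : ℝ} (hρ : 0 < ρ) {s : ℂ} (hs : 0 < s.re) :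
    MellinConvergent (fun t : ℝ => (Real.exp (-t ^ ρ) : ℂ)) s :=
  (MellinConvergent.comp_rpow hρ.ne').2 (mellinConvergent_exp_neg (by simpa using div_pos hs hρ))

theorem mellin_exp_neg_rpow {ρ : ℝ} (hρ : 0 < ρ) {s : ℂ} (hs : 0 < s.re) :
    mellin (fun t : ℝ => (Real.exp (-t ^ ρ) : ℂ)) s = Gamma (s / ρ) / ρ := by
  rw [mellin_comp_rpow (fun t : ℝ => (Real.exp (-t) : ℂ)),
    mellin_exp_neg (by simpa using div_pos hs hρ), abs_of_pos hρ, real_smul, ofReal_inv,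
    inv_mul_eq_div]

theorem kraetzel_eq_mellinConvolution (ν ρ u : ℝ) :
    (kraetzel ν ρ u : ℂ) = mellinConvolution (fun x : ℝ => (Real.exp (-x) : ℂ))
      (fun l : ℝ => (l : ℂ) ^ (ν : ℂ) * Real.exp (-l ^ ρ)) u := by
  rw [kraetzel, ← integral_complex_ofReal, mellinConvolution]
  refine setIntegral_congr_fun measurableSet_Ioi fun l hl => ?_
  have hl : 0 < l := hl
  rw [← ofReal_cpow hl.le, Real.rpow_sub_one hl.ne']
  push_cast
  ring

/-- Mellin transform of the Krätzel density:
`M[f̃^ν_ρ](s) = Γ(s) Γ((s+ν)/ρ) / Γ((ν+1)/ρ)` for `Re s > 0`. -/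
theorem statement19 (ν ρ : ℝ) (hν : 0 < ν) (hρ : 0 < ρ) :
    ∀ s : ℂ, 0 < s.re →
      (∫ t in Set.Ioi (0:ℝ), (kraetzelPDF ν ρ t : ℂ) * (t : ℂ) ^ (s - 1)) =
        Complex.Gamma s * Complex.Gamma ((s + ν) / ρ) / Complex.Gamma (((ν : ℂ) + 1) / ρ) := by
  intro s hs
  have hΓ : ((Real.Gamma ((ν + 1) / ρ) : ℝ) : ℂ) = Gamma (((ν : ℂ) + 1) / ρ) := by
    rw [← Gamma_ofReal]
    push_cast
    rfl
  have hΓ_ne : Gamma (((ν : ℂ) + 1) / ρ) ≠ 0 := by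
    rw [← hΓ, ofReal_ne_zero]
    exact (Real.Gamma_pos_of_pos (by positivity)).ne'
  have hsν : 0 < (s + ν).re := by simpa using add_pos hs hν
  have hkernel : MellinConvergent (fun l : ℝ => (l : ℂ) ^ (ν : ℂ) * Real.exp (-l ^ ρ)) s :=
    MellinConvergent.cpow_smul.2 (mellinConvergent_exp_neg_rpow hρ hsν)
  have hkernel_mellin : mellin (fun l : ℝ => (l : ℂ) ^ (ν : ℂ) * Real.exp (-l ^ ρ)) s =
      Gamma ((s + ν) / ρ) / ρ := by
    rw [← mellin_exp_neg_rpow hρ hsν]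
    exact mellin_cpow_smul _ s ν
  calc ∫ t in Ioi (0:ℝ), (kraetzelPDF ν ρ t : ℂ) * (t : ℂ) ^ (s - 1)
      = ρ / Gamma (((ν : ℂ) + 1) / ρ) *
          mellin (mellinConvolution (fun x : ℝ => (Real.exp (-x) : ℂ))
            (fun l : ℝ => (l : ℂ) ^ (ν : ℂ) * Real.exp (-l ^ ρ))) s := by
        rw [mellin, ← integral_const_mul]
        refine setIntegral_congr_fun measurableSet_Ioi fun t ht => ?_
        rw [kraetzelPDF, if_pos (show 0 < t from ht), ofReal_mul, ofReal_div, hΓ,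
          kraetzel_eq_mellinConvolution, smul_eq_mul]
        ring
    _ = ρ / Gamma (((ν : ℂ) + 1) / ρ) * (Gamma s * (Gamma ((s + ν) / ρ) / ρ)) := by
        rw [mellin_mellinConvolution (by fun_prop) (by fun_prop) (mellinConvergent_exp_neg hs)
          hkernel, mellin_exp_neg hs, hkernel_mellin]
    _ = _ := by
        have hρ_ne : (ρ : ℂ) ≠ 0 := ofReal_ne_zero.2 hρ.ne'
        field_simp
end
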